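/- Let r ≥ 2 be an integer. For each k = 1,...,r, the vector w_k is an eigenvector of the transpose (M_2)^T corresponding to the eigenvalue μ_k = 2 − 2cos β_k; that is, (M_2)^T · w_k = μ_k · w_k. -/

import Mathlib

/-! With `c m = (-1)^m · 2 cos (m β)`, the product-to-sum formula gives
`c (m+2) + 2 c (m+1) + c m = (2 - 2 cos β) c (m+1)`. The vector `w_k` lists
`c (r-1), …, c 1` followed by `c 0 / 2`, so each row of `(M₂)ᵀ w_k` is an instance of this
recurrence: the entry `2` in the last row of `M₂` compensates for the halved last entry, the last
row reads `c 1 + 2 = 2 - 2 cos β`, and the first row uses `c r = -c (r-1)`, which holds because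
`(2r - 1) β_k ∈ 2πℤ`. -/

open Matrix Real BigOperators

noncomputable section

/-- The divisor-type matrix `M₂`: tridiagonal with diagonal `(1, 2, ..., 2)`,
superdiagonal entries `1`, subdiagonal entries `1` except the last one which is `2`
(0-based indexing). -/
def M2 (r : ℕ) : Matrix (Fin r) (Fin r) ℤ :=
  Matrix.of fun i j =>
    if i = j then (if (i : ℕ) = 0 then 1 else 2)
    else if (i : ℕ) + 1 = (j : ℕ) then 1
    else if (j : ℕ) + 1 = (i : ℕ) then (if (i : ℕ) = r - 1 then 2 else 1)
    else 0

/-- `β_k = (2k - 2)π / (2r - 1)`. -/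
def betaA (r k : ℕ) : ℝ := (2 * (k : ℝ) - 2) * Real.pi / (2 * (r : ℝ) - 1)

/-- The vector `w_k` whose `j`-th entry (1-based `j ≤ r - 1`) is
`(-1)^(r-j) · 2 cos((r-j) β_k)` and whose last entry is `1`; here 0-based indexing. -/
def wvec (r k : ℕ) : Fin r → ℝ :=
  fun j => if (j : ℕ) = r - 1 then 1
    else (-1 : ℝ) ^ (r - 1 - (j : ℕ)) * (2 * Real.cos (((r - 1 - (j : ℕ) : ℕ) : ℝ) * betaA r k))

def signedCos (β : ℝ) (m : ℕ) : ℝ := (-1) ^ m * (2 * cos (m * β))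

section signedCos

variable (β : ℝ)

lemma signedCos_zero : signedCos β 0 = 2 := by
  simp [signedCos]

lemma signedCos_one : signedCos β 1 = -2 * cos β := by
  simp [signedCos]

lemma signedCos_add_two (m : ℕ) :
    signedCos β (m + 2) + 2 * signedCos β (m + 1) + signedCos β m =
      (2 - 2 * cos β) * signedCos β (m + 1) := by
  have hsum : cos ((m + 2 : ℕ) * β) + cos (m * β) = 2 * cos β * cos ((m + 1 : ℕ) * β) := by
    push_cast
    rw [show ((m : ℝ) + 2) * β = (m + 1) * β + β by ring,
      show (m : ℝ) * β = (m + 1) * β - β by ring, cos_add, cos_sub]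
    ring
  simp only [signedCos, pow_succ]
  linear_combination (2 * (-1 : ℝ) ^ m) * hsum

lemma signedCos_succ_of_cos_eq {n : ℕ} (h : cos ((n + 1) * β) = cos (n * β)) :
    signedCos β (n + 1) = -signedCos β n := by
  simp only [signedCos, pow_succ]
  push_cast
  rw [h]
  ring

end signedCos

lemma cos_succ_mul_betaA (n k : ℕ) :
    cos ((n + 1) * betaA (n + 1) k) = cos (n * betaA (n + 1) k) := by
  have hβ : (n + 1) * betaA (n + 1) k = ((k : ℤ) - 1 : ℤ) * (2 * π) - n * betaA (n + 1) k := by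
    have hden : 2 * ((n + 1 : ℕ) : ℝ) - 1 = 2 * n + 1 := by push_cast; ring
    rw [betaA, hden]
    field_simp
    push_cast
    ring
  rw [hβ, cos_int_mul_two_pi_sub]

lemma signedCos_betaA_succ (n k : ℕ) :
    signedCos (betaA (n + 1) k) (n + 1) = -signedCos (betaA (n + 1) k) n :=
  signedCos_succ_of_cos_eq _ (cos_succ_mul_betaA n k)

lemma M2_transpose_mulVec_apply (r : ℕ) (u : ℕ → ℝ) (j : Fin r) :
    (((M2 r).map (Int.cast : ℤ → ℝ))ᵀ *ᵥ fun i => u i) j =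
      (if (j : ℕ) = 0 then 0 else u (j - 1)) + (if (j : ℕ) = 0 then 1 else 2) * u j +
        (if (j : ℕ) + 1 < r then (if (j : ℕ) + 1 = r - 1 then 2 else 1) * u (j + 1) else 0) := by
  obtain ⟨n, hn⟩ := j
  have hentry : ∀ i : Fin r, ((M2 r).map (Int.cast : ℤ → ℝ))ᵀ ⟨n, hn⟩ i * u i =
      (if (i : ℕ) + 1 = n then u i else 0) +
        (if (i : ℕ) = n then (if n = 0 then 1 else 2) * u i else 0) +
        (if n + 1 = i then (if (i : ℕ) = r - 1 then 2 else 1) * u i else 0) := by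
    intro ⟨i, hi⟩
    simp only [transpose_apply, map_apply, M2, of_apply, Fin.ext_iff]
    split_ifs <;> first | omega | (push_cast; ring1)
  simp only [mulVec, dotProduct, hentry, Finset.sum_add_distrib,
    Fin.sum_univ_eq_sum_range (fun i => if i + 1 = n then u i else 0),
    Fin.sum_univ_eq_sum_range
      (fun i => if i = n then (if n = 0 then (1 : ℝ) else 2) * u i else 0),
    Fin.sum_univ_eq_sum_range
      (fun i => if n + 1 = i then (if i = r - 1 then (2 : ℝ) else 1) * u i else 0),
    Finset.sum_ite_eq', Finset.sum_ite_eq, Finset.mem_range]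
  rcases n with _ | s
  · simp [hn]
  · simp [hn, Nat.lt_of_succ_lt hn]

def wseq (r : ℕ) (β : ℝ) (n : ℕ) : ℝ := if n = r - 1 then 1 else signedCos β (r - 1 - n)

section wseq

variable {r : ℕ} (β : ℝ)

lemma wvec_eq_wseq (k : ℕ) : wvec r k = fun j : Fin r => wseq r (betaA r k) j := rfl

lemma wseq_last : wseq r β (r - 1) = 1 := if_pos rfl

lemma wseq_of_lt {n : ℕ} (hn : n < r - 1) : wseq r β n = signedCos β (r - 1 - n) :=
  if_neg hn.ne

lemma ite_two_one_mul_wseq {n : ℕ} (hn : n < r) :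
    (if n = r - 1 then 2 else 1) * wseq r β n = signedCos β (r - 1 - n) := by
  by_cases h : n = r - 1
  · rw [if_pos h, h, wseq_last, Nat.sub_self, signedCos_zero, mul_one]
  · rw [if_neg h, one_mul, wseq_of_lt β (by omega)]

end wseq

theorem M2_transpose_eigenvector_general (r : ℕ) (hr : 2 ≤ r) (k : ℕ) :
    (((M2 r).map (Int.cast : ℤ → ℝ)).transpose).mulVec (wvec r k) =
      (2 - 2 * Real.cos (betaA r k)) • wvec r k := by
  rw [wvec_eq_wseq]
  ext ⟨j, hj⟩
  rw [M2_transpose_mulVec_apply, Pi.smul_apply, smul_eq_mul]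
  dsimp only
  obtain rfl | ⟨hj0, hint⟩ | ⟨rfl, hfirst⟩ :
      j = r - 1 ∨ (j ≠ 0 ∧ j < r - 1) ∨ (j = 0 ∧ j < r - 1) := by omega
  · rw [if_neg (by omega), if_neg (by omega), if_neg (by omega), wseq_of_lt _ (by omega),
      wseq_last, show r - 1 - (r - 1 - 1) = 1 by omega, signedCos_one]
    ring
  · obtain ⟨m, hm⟩ : ∃ m, r - 1 - j = m + 1 := ⟨r - 2 - j, by omega⟩
    rw [if_neg hj0, if_neg hj0, if_pos (by omega), ite_two_one_mul_wseq _ (by omega),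
      wseq_of_lt _ (by omega), wseq_of_lt _ hint, show r - 1 - (j - 1) = m + 2 by omega, hm,
      show r - 1 - (j + 1) = m by omega]
    exact signedCos_add_two _ m
  · obtain ⟨n, rfl⟩ : ∃ n, r = n + 2 := ⟨r - 2, by omega⟩
    rw [if_pos rfl, if_pos rfl, if_pos (by omega), ite_two_one_mul_wseq _ (by omega),
      wseq_of_lt _ hfirst, show n + 2 - 1 - 1 = n by omega, show n + 2 - 1 - 0 = n + 1 by omega]
    linear_combination signedCos_add_two _ n - signedCos_betaA_succ (n + 1) k

/-- `w_k` is an eigenvector of `(M₂)ᵀ` with eigenvalue `μ_k = 2 - 2 cos β_k`. -/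
theorem M2_transpose_eigenvector (r : ℕ) (hr : 2 ≤ r) (k : ℕ) (hk1 : 1 ≤ k) (hk2 : k ≤ r) :
    (((M2 r).map (Int.cast : ℤ → ℝ)).transpose).mulVec (wvec r k) =
      (2 - 2 * Real.cos (betaA r k)) • wvec r k :=
  M2_transpose_eigenvector_general r hr k
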